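/- arXiv:math/9906060 — 5 statements merged into one kernel-verified Lean document; each statement's English description precedes it below -/
import Mathlib

section
/- Let R be a (not necessarily commutative) domain in which the set of nonzero elements is a left and right Ore set, and let D = Fract(R) be the Ore localization of R at its nonzero elements (a division ring containing R). Then there exist elements x, y ∈ D with x*y − y*x = 1 if and only if there exist nonzero elements a, b, c, d, u, v, s, t, z, p, w, q in R satisfying a*v = s*d, u*b = c*t, z*u = p*s, v*q = t*w, and p*a*b*w − z*c*d*q = z*u*v*q. -/
/-- Auxiliary pure-ring identity: given the "fraction" equations, the
polynomial relation is equivalent to the commutator relation multiplied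
through by the denominators. -/
lemma weyl_aux {E : Type*} [Ring E] (A B C D' U V S T Z P W Q X Y : E)
    (h1 : S * X = A) (h2 : X * V = D') (h3 : C * Y = U) (h4 : Y * B = T)
    (h5 : Z * U = P * S) (h6 : V * Q = T * W) :
    (P * A * B * W - Z * C * D' * Q = Z * U * V * Q) ↔
      (Z * C * ((Y * X - X * Y) * (B * W)) = Z * C * ((Y * Y) * (B * W))) := by
  have e1 : Z * C * ((Y * X) * (B * W)) = P * A * B * W := by
    calc Z * C * ((Y * X) * (B * W)) = Z * (C * Y) * X * B * W := by noncomm_ring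
    _ = Z * U * X * B * W := by rw [h3]
    _ = P * S * X * B * W := by rw [h5]
    _ = P * (S * X) * B * W := by rw [mul_assoc P S X]
    _ = P * A * B * W := by rw [h1]
  have e2 : Z * C * ((X * Y) * (B * W)) = Z * C * D' * Q := by
    calc Z * C * ((X * Y) * (B * W)) = Z * C * (X * ((Y * B) * W)) := by noncomm_ring
    _ = Z * C * (X * (T * W)) := by rw [h4]
    _ = Z * C * (X * (V * Q)) := by rw [← h6]
    _ = Z * C * D' * Q := by rw [← mul_assoc X V Q, h2, ← mul_assoc]
  have e3 : Z * C * ((Y * Y) * (B * W)) = Z * U * V * Q := by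
    calc Z * C * ((Y * Y) * (B * W)) = Z * (C * Y) * ((Y * B) * W) := by noncomm_ring
    _ = Z * U * (T * W) := by rw [h3, h4]
    _ = Z * U * (V * Q) := by rw [← h6]
    _ = Z * U * V * Q := by rw [← mul_assoc]
  rw [sub_mul, mul_sub, e1, e2, e3]

/-- Lemma 2.2 (Alev–Dumas, Lemma 2.9): for a (noncommutative) domain `R` whose
nonzero elements form a left and right Ore set, with division ring of fractions
`D = Fract R` (given by an embedding `φ : R →+* D` such that every element of
`D` is a left and a right fraction of elements of `R`), there exist `x, y ∈ D`
with `x*y - y*x = 1` iff there exist nonzero `a, b, c, d, u, v, s, t, z, p, w, q`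
in `R` with `a*v = s*d`, `u*b = c*t`, `z*u = p*s`, `v*q = t*w` and
`p*a*b*w - z*c*d*q = z*u*v*q`. -/
theorem weyl_relation_in_fraction_field_iff
    {R D : Type*} [Ring R] [IsDomain R] [DivisionRing D]
    (hOreR : ∀ r s : R, s ≠ 0 → ∃ r' s' : R, s' ≠ 0 ∧ r * s' = s * r')
    (hOreL : ∀ r s : R, s ≠ 0 → ∃ r' s' : R, s' ≠ 0 ∧ s' * r = r' * s)
    (φ : R →+* D) (hφ : Function.Injective φ)
    (hfracR : ∀ x : D, ∃ r s : R, s ≠ 0 ∧ x = φ r * (φ s)⁻¹)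
    (hfracL : ∀ x : D, ∃ r s : R, s ≠ 0 ∧ x = (φ s)⁻¹ * φ r) :
    (∃ x y : D, x * y - y * x = 1) ↔
      ∃ a b c d u v s t z p w q : R,
        a ≠ 0 ∧ b ≠ 0 ∧ c ≠ 0 ∧ d ≠ 0 ∧ u ≠ 0 ∧ v ≠ 0 ∧ s ≠ 0 ∧ t ≠ 0 ∧
        z ≠ 0 ∧ p ≠ 0 ∧ w ≠ 0 ∧ q ≠ 0 ∧
        a * v = s * d ∧ u * b = c * t ∧ z * u = p * s ∧ v * q = t * w ∧
        p * a * b * w - z * c * d * q = z * u * v * q := by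
  have hφ0 : ∀ r : R, r ≠ 0 → φ r ≠ 0 := by
    intro r h0 h
    exact h0 (hφ (h.trans (map_zero φ).symm))
  constructor
  · rintro ⟨x, y, hxy⟩
    have hy : y ≠ 0 := by rintro rfl; simp at hxy
    have hx : x ≠ 0 := by rintro rfl; simp at hxy
    obtain ⟨d, v, hv, hxdv⟩ := hfracR x
    have hd : d ≠ 0 := by rintro rfl; simp at hxdv; exact hx hxdv
    obtain ⟨u, c, hc, hyu⟩ := hfracL y⁻¹
    have hyi : y⁻¹ ≠ 0 := inv_ne_zero hy
    have hu : u ≠ 0 := by rintro rfl; simp at hyu; exact hy hyu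
    obtain ⟨a, s, hs, h_sd⟩ := hOreL d v hv
    have ha : a ≠ 0 := by
      rintro rfl; rw [zero_mul] at h_sd; exact (mul_ne_zero hs hd) h_sd
    obtain ⟨t, b, hb, h_ub⟩ := hOreR u c hc
    have ht : t ≠ 0 := by
      rintro rfl; rw [mul_zero] at h_ub; exact (mul_ne_zero hu hb) h_ub
    obtain ⟨p, z, hz, h_zu⟩ := hOreL u s hs
    have hp : p ≠ 0 := by
      rintro rfl; rw [zero_mul] at h_zu; exact (mul_ne_zero hz hu) h_zu
    obtain ⟨w, q, hq, h_vq⟩ := hOreR v t ht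
    have hw : w ≠ 0 := by
      rintro rfl; rw [mul_zero] at h_vq; exact (mul_ne_zero hv hq) h_vq
    refine ⟨a, b, c, d, u, v, s, t, z, p, w, q,
      ha, hb, hc, hd, hu, hv, hs, ht, hz, hp, hw, hq,
      h_sd.symm, h_ub, h_zu, h_vq, ?_⟩
    -- translate everything into `D`
    have hav : φ a * φ v = φ s * φ d := by rw [← map_mul, ← map_mul, h_sd]
    have hub' : φ u * φ b = φ c * φ t := by rw [← map_mul, ← map_mul, h_ub]
    have h1 : φ s * x = φ a := by
      rw [hxdv, ← mul_assoc, ← hav, mul_assoc, mul_inv_cancel₀ (hφ0 v hv), mul_one]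
    have h2 : x * φ v = φ d := by
      rw [hxdv, mul_assoc, inv_mul_cancel₀ (hφ0 v hv), mul_one]
    have h3 : φ c * y⁻¹ = φ u := by
      rw [hyu, ← mul_assoc, mul_inv_cancel₀ (hφ0 c hc), one_mul]
    have h4 : y⁻¹ * φ b = φ t := by
      rw [hyu, mul_assoc, hub', ← mul_assoc, inv_mul_cancel₀ (hφ0 c hc), one_mul]
    have h5 : φ z * φ u = φ p * φ s := by rw [← map_mul, ← map_mul, h_zu]
    have h6 : φ v * φ q = φ t * φ w := by rw [← map_mul, ← map_mul, h_vq]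
    have hkey : y⁻¹ * x - x * y⁻¹ = y⁻¹ * y⁻¹ := by
      have e : y⁻¹ * (x * y - y * x) * y⁻¹ = y⁻¹ * x - x * y⁻¹ := by
        rw [mul_sub, sub_mul]
        congr 1
        · rw [← mul_assoc, mul_assoc (y⁻¹ * x) y y⁻¹, mul_inv_cancel₀ hy, mul_one]
        · rw [← mul_assoc, inv_mul_cancel₀ hy, one_mul]
      rw [← e, hxy, mul_one]
    have hR : φ z * φ c * ((y⁻¹ * x - x * y⁻¹) * (φ b * φ w)) =
        φ z * φ c * ((y⁻¹ * y⁻¹) * (φ b * φ w)) := by rw [hkey]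
    have hD := (weyl_aux (φ a) (φ b) (φ c) (φ d) (φ u) (φ v) (φ s) (φ t)
      (φ z) (φ p) (φ w) (φ q) x y⁻¹ h1 h2 h3 h4 h5 h6).mpr hR
    apply hφ
    rw [map_sub]
    simp only [map_mul]
    exact hD
  · rintro ⟨a, b, c, d, u, v, s, t, z, p, w, q,
      ha, hb, hc, hd, hu, hv, hs, ht, hz, hp, hw, hq,
      hav, hub, hzu, hvq, hmain⟩
    set X : D := (φ s)⁻¹ * φ a with hX
    set Y : D := (φ c)⁻¹ * φ u with hY
    have hav' : φ a * φ v = φ s * φ d := by rw [← map_mul, ← map_mul, hav]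
    have hub' : φ u * φ b = φ c * φ t := by rw [← map_mul, ← map_mul, hub]
    have h1 : φ s * X = φ a := by
      rw [hX, ← mul_assoc, mul_inv_cancel₀ (hφ0 s hs), one_mul]
    have h2 : X * φ v = φ d := by
      rw [hX, mul_assoc, hav', ← mul_assoc, inv_mul_cancel₀ (hφ0 s hs), one_mul]
    have h3 : φ c * Y = φ u := by
      rw [hY, ← mul_assoc, mul_inv_cancel₀ (hφ0 c hc), one_mul]
    have h4 : Y * φ b = φ t := by
      rw [hY, mul_assoc, hub', ← mul_assoc, inv_mul_cancel₀ (hφ0 c hc), one_mul]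
    have h5 : φ z * φ u = φ p * φ s := by rw [← map_mul, ← map_mul, hzu]
    have h6 : φ v * φ q = φ t * φ w := by rw [← map_mul, ← map_mul, hvq]
    have hmainD : φ p * φ a * φ b * φ w - φ z * φ c * φ d * φ q =
        φ z * φ u * φ v * φ q := by
      have := congrArg φ hmain
      rw [map_sub] at this
      simp only [map_mul] at this
      exact this
    have hR := (weyl_aux (φ a) (φ b) (φ c) (φ d) (φ u) (φ v) (φ s) (φ t)
      (φ z) (φ p) (φ w) (φ q) X Y h1 h2 h3 h4 h5 h6).mp hmainD
    have hZC : φ z * φ c ≠ 0 := mul_ne_zero (hφ0 z hz) (hφ0 c hc)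
    have hBW : φ b * φ w ≠ 0 := mul_ne_zero (hφ0 b hb) (hφ0 w hw)
    have hkey : Y * X - X * Y = Y * Y :=
      mul_right_cancel₀ hBW (mul_left_cancel₀ hZC hR)
    have hYne : Y ≠ 0 := by
      intro h
      rw [h, mul_zero] at h3
      exact hφ0 u hu h3.symm
    refine ⟨X, Y⁻¹, ?_⟩
    have e : Y⁻¹ * (Y * X - X * Y) * Y⁻¹ = X * Y⁻¹ - Y⁻¹ * X := by
      rw [mul_sub, sub_mul]
      congr 1
      · rw [← mul_assoc, inv_mul_cancel₀ hYne, one_mul]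
      · rw [← mul_assoc, mul_assoc (Y⁻¹ * X) Y Y⁻¹, mul_inv_cancel₀ hYne, mul_one]
    rw [← e, hkey, ← mul_assoc, ← mul_assoc, inv_mul_cancel₀ hYne, one_mul,
      mul_inv_cancel₀ hYne]
end

section
/- Let k be a field, R an associative k-algebra with unit, and x ∈ R an FA-element, i.e. x is not a zero divisor and for every y ∈ R there exist N ∈ ℕ and scalars a_0, …, a_N ∈ k with a_0 ≠ 0 and a_N ≠ 0 such that a_0·x^N y + a_1·x^{N−1} y x + ⋯ + a_N·y x^N = 0. Then the multiplicative set S = {x^i : i ∈ ℕ} of powers of x satisfies the left and right Ore conditions in R: for every y ∈ R and every n ∈ ℕ there exist m ∈ ℕ and b ∈ R with x^m * y = b * x^n, and there exist m' ∈ ℕ and b' ∈ R with y * x^{m'} = x^n * b'. -/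
/-- Proposition 3.2: an FA-element `x` of a `k`-algebra `R` (a non-zero-divisor
such that for every `y ∈ R` there are scalars `a_0, …, a_N ∈ k` with `a_0 ≠ 0`,
`a_N ≠ 0` and `a_0 x^N y + a_1 x^{N-1} y x + ⋯ + a_N y x^N = 0`) generates an
Ore set: the powers of `x` satisfy the left and right Ore conditions. -/
theorem fa_element_powers_form_ore_set
    {k R : Type*} [Field k] [Ring R] [Algebra k R] (x : R)
    (hx_left : ∀ r : R, x * r = 0 → r = 0)
    (hx_right : ∀ r : R, r * x = 0 → r = 0)
    (hFA : ∀ y : R, ∃ (N : ℕ) (a : ℕ → k), a 0 ≠ 0 ∧ a N ≠ 0 ∧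
      ∑ i ∈ Finset.range (N + 1), a i • (x ^ (N - i) * y * x ^ i) = 0) :
    ∀ (y : R) (n : ℕ),
      (∃ (m : ℕ) (b : R), x ^ m * y = b * x ^ n) ∧
      (∃ (m' : ℕ) (b' : R), y * x ^ m' = x ^ n * b') := by
  have left1 : ∀ y : R, ∃ (m : ℕ) (b : R), x ^ m * y = b * x := by
    intro y
    obtain ⟨N, a, h0, hN, hsum⟩ := hFA y
    match N with
    | 0 =>
      simp at hsum
      have hy : y = 0 := by tauto
      exact ⟨0, 0, by simp [hy]⟩
    | M + 1 =>
      rw [Finset.sum_range_succ'] at hsum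
      simp only [Nat.sub_zero, pow_zero, mul_one] at hsum
      have hterm : ∀ i ∈ Finset.range (M + 1),
          a (i + 1) • (x ^ (M + 1 - (i + 1)) * y * x ^ (i + 1)) =
          (a (i + 1) • (x ^ (M - i) * y * x ^ i)) * x := by
        intro i hi
        rw [smul_mul_assoc, Nat.succ_sub_succ, pow_succ, ← mul_assoc]
      rw [Finset.sum_congr rfl hterm, ← Finset.sum_mul] at hsum
      set S := ∑ i ∈ Finset.range (M + 1), a (i + 1) • (x ^ (M - i) * y * x ^ i) with hS
      have key : a 0 • (x ^ (M + 1) * y) = (-S) * x := by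
        rw [neg_mul]
        exact eq_neg_of_add_eq_zero_right hsum
      refine ⟨M + 1, (a 0)⁻¹ • (-S), ?_⟩
      rw [smul_mul_assoc, ← key, ← smul_assoc, smul_eq_mul, inv_mul_cancel₀ h0, one_smul]
  have right1 : ∀ y : R, ∃ (m : ℕ) (b : R), y * x ^ m = x * b := by
    intro y
    obtain ⟨N, a, h0, hN, hsum⟩ := hFA y
    match N with
    | 0 =>
      simp at hsum
      have hy : y = 0 := by tauto
      exact ⟨0, 0, by simp [hy]⟩
    | M + 1 =>
      rw [Finset.sum_range_succ] at hsum
      simp only [Nat.sub_self, pow_zero, one_mul] at hsum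
      have hterm : ∀ i ∈ Finset.range (M + 1),
          a i • (x ^ (M + 1 - i) * y * x ^ i) =
          x * (a i • (x ^ (M - i) * y * x ^ i)) := by
        intro i hi
        have hlt : i < M + 1 := Finset.mem_range.mp hi
        rw [mul_smul_comm]
        congr 1
        have : M + 1 - i = (M - i) + 1 := by omega
        rw [this, pow_succ']
        simp [mul_assoc]
      rw [Finset.sum_congr rfl hterm, ← Finset.mul_sum] at hsum
      set S := ∑ i ∈ Finset.range (M + 1), a i • (x ^ (M - i) * y * x ^ i) with hS
      have key : a (M + 1) • (y * x ^ (M + 1)) = x * (-S) := by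
        rw [mul_neg]
        exact eq_neg_of_add_eq_zero_right hsum
      refine ⟨M + 1, (a (M + 1))⁻¹ • (-S), ?_⟩
      rw [mul_smul_comm, ← key, ← smul_assoc, smul_eq_mul, inv_mul_cancel₀ hN, one_smul]
  intro y n
  constructor
  · induction n with
    | zero => exact ⟨0, y, by simp⟩
    | succ n ih =>
      obtain ⟨m, b, hb⟩ := ih
      obtain ⟨m2, b2, h2⟩ := left1 b
      refine ⟨m2 + m, b2, ?_⟩
      rw [pow_add, mul_assoc, hb, ← mul_assoc, h2, mul_assoc, ← pow_succ']
  · induction n with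
    | zero => exact ⟨0, y, by simp⟩
    | succ n ih =>
      obtain ⟨m, b, hb⟩ := ih
      obtain ⟨m2, b2, h2⟩ := right1 b
      refine ⟨m + m2, b2, ?_⟩
      rw [pow_add, ← mul_assoc, hb, mul_assoc, h2, ← mul_assoc, ← pow_succ]
end

section
/- Let F be a field and D a division ring that is an F-algebra with F contained in the center of D. Assume D is pure quantum, i.e. there exist no elements u, v ∈ D with u*v − v*u = 1. Let x ∈ D be nonzero and let Ad_x : D → D be the F-linear map Ad_x(y) = x y x^{−1}. If W is a finite-dimensional F-subspace of D that is invariant under Ad_x and the minimal polynomial of the restriction of Ad_x to W splits into linear factors over F, then the restriction of Ad_x to W is diagonalizable: W is the (direct) sum of the eigenspaces of Ad_x restricted to W; equivalently, W has an F-basis consisting of eigenvectors of Ad_x. -/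
/-!
If `Ad_x` had a Jordan block of size two, say `Ad_x w = μ w + w'` and `Ad_x w' = μ w'` with
`w' ≠ 0`, then `t = w'⁻¹ w` would satisfy `x t x⁻¹ = t + μ⁻¹`, and `u = x`, `v = μ x⁻¹ t` would
give `u v - v u = 1`. Hence the minimal polynomial of `Ad_x|_W` has no repeated root; being split,
it is a product of distinct linear factors, so `W` is the sum of the eigenspaces.
-/

open Polynomial Module

namespace Module.End

variable {K V : Type*} [Field K] [AddCommGroup V] [Module K V] (f : End K V)

theorem ker_aeval_X_sub_C_pow (μ : K) (k : ℕ) :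
    LinearMap.ker (aeval f ((X - C μ) ^ k)) = f.genEigenspace μ k := by
  rw [genEigenspace_nat, map_pow, map_sub, aeval_X, aeval_C, Algebra.algebraMap_eq_smul_one]

theorem ker_aeval_prod_X_sub_C_le_iSup_eigenspace (s : Finset K) :
    LinearMap.ker (aeval f (∏ μ ∈ s, (X - C μ))) ≤ ⨆ μ, f.eigenspace μ := by
  classical
  induction s using Finset.induction_on with
  | empty => simp [one_eq_id]
  | insert μ s hμs ih =>
    have hcoprime : IsCoprime (X - C μ) (∏ ν ∈ s, (X - C ν)) :=
      IsCoprime.prod_right fun ν hν ↦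
        pairwise_coprime_X_sub_C Function.injective_id (ne_of_mem_of_not_mem hν hμs).symm
    rw [Finset.prod_insert hμs, ← sup_ker_aeval_eq_ker_aeval_mul_of_coprime f hcoprime]
    refine sup_le ?_ ih
    rw [← pow_one (X - C μ), ker_aeval_X_sub_C_pow, Nat.cast_one]
    exact le_iSup f.eigenspace μ

theorem aeval_X_sub_C_mul_eq_zero {μ : K} {q : K[X]}
    (h : f.genEigenspace μ 2 ≤ f.eigenspace μ) (hq : aeval f ((X - C μ) ^ 2 * q) = 0) :
    aeval f ((X - C μ) * q) = 0 := by
  ext v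
  have hv : aeval f q v ∈ f.genEigenspace μ 2 := by
    rw [← Nat.cast_two, ← ker_aeval_X_sub_C_pow, LinearMap.mem_ker, ← mul_apply,
      ← map_mul, hq, LinearMap.zero_apply]
  have := h hv
  rw [eigenspace, ← Nat.cast_one, ← ker_aeval_X_sub_C_pow, pow_one, LinearMap.mem_ker] at this
  rw [map_mul, mul_apply, this, LinearMap.zero_apply]

theorem nodup_roots_minpoly [FiniteDimensional K V]
    (h : ∀ μ, f.genEigenspace μ 2 ≤ f.eigenspace μ) : (minpoly K f).roots.Nodup := by
  classical
  refine Multiset.nodup_iff_count_le_one.mpr fun μ ↦ not_lt.mp fun hμ ↦ ?_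
  have hne : minpoly K f ≠ 0 := minpoly.ne_zero (Algebra.IsIntegral.isIntegral f)
  obtain ⟨q, hq⟩ : (X - C μ) ^ 2 ∣ minpoly K f := by
    rw [← le_rootMultiplicity_iff hne, ← count_roots]
    exact hμ
  have hq0 : (X - C μ) * q ≠ 0 := by
    rintro h0
    rw [sq, mul_assoc, h0, mul_zero] at hq
    exact hne hq
  have hdvd : (X - C μ) * q * (X - C μ) ∣ (X - C μ) * q * 1 := by
    rw [mul_one, mul_right_comm, ← sq, ← hq]
    exact minpoly.dvd K f (aeval_X_sub_C_mul_eq_zero f (h μ) (hq ▸ minpoly.aeval K f))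
  exact not_isUnit_X_sub_C μ (isUnit_of_dvd_one ((mul_dvd_mul_iff_left hq0).mp hdvd))

theorem iSup_eigenspace_eq_top_of_splits [FiniteDimensional K V] (hsplit : (minpoly K f).Splits)
    (h : ∀ μ, f.genEigenspace μ 2 ≤ f.eigenspace μ) : ⨆ μ, f.eigenspace μ = ⊤ := by
  let roots : Finset K := ⟨_, f.nodup_roots_minpoly h⟩
  have hprod : ∏ μ ∈ roots, (X - C μ) = minpoly K f :=
    (hsplit.eq_prod_roots_of_monic (minpoly.monic (Algebra.IsIntegral.isIntegral f))).symm
  refine top_le_iff.mp (le_trans ?_ (f.ker_aeval_prod_X_sub_C_le_iSup_eigenspace roots))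
  rw [hprod, minpoly.aeval, LinearMap.ker_zero]

end Module.End

def IsPureQuantum (D : Type*) [Ring D] : Prop :=
  ¬ ∃ u v : D, u * v - v * u = 1

namespace IsPureQuantum

variable {D : Type*} [DivisionRing D]

theorem conj_ne_add (hD : IsPureQuantum D) {x c : D} (hx : x ≠ 0) (hc : c ≠ 0)
    (hxc : Commute x c) (t : D) : x * t * x⁻¹ ≠ t + c := by
  intro h
  have hconj : x⁻¹ * t * x = t - c := by
    have h' : x⁻¹ * (x * t * x⁻¹) * x = t := by simp [mul_assoc, hx]
    rw [h, mul_add, add_mul, hxc.inv_left₀.eq, mul_assoc c, inv_mul_cancel₀ hx, mul_one] at h'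
    exact eq_sub_of_add_eq h'
  refine hD ⟨x, c⁻¹ * (x⁻¹ * t), ?_⟩
  calc x * (c⁻¹ * (x⁻¹ * t)) - c⁻¹ * (x⁻¹ * t) * x = c⁻¹ * t - c⁻¹ * (t - c) := by
        rw [← mul_assoc x, hxc.inv_right₀.eq, mul_assoc, mul_inv_cancel_left₀ hx, mul_assoc,
          hconj]
    _ = 1 := by rw [mul_sub, inv_mul_cancel₀ hc, sub_sub_cancel]

variable {F : Type*} [Field F] [Algebra F D]

theorem eq_zero_of_conj_eq_smul_add (hD : IsPureQuantum D) {x w w' : D} (hx : x ≠ 0) (μ : F)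
    (hw : x * w * x⁻¹ = μ • w + w') (hw' : x * w' * x⁻¹ = μ • w') : w' = 0 := by
  by_contra hw'0
  have hμ : μ ≠ 0 := by
    rintro rfl
    rw [zero_smul, mul_eq_zero, mul_eq_zero, inv_eq_zero] at hw'
    tauto
  refine hD.conj_ne_add hx (c := algebraMap F D μ⁻¹) (by simpa using hμ)
    (Algebra.commutes _ _).symm (w'⁻¹ * w) ?_
  have hconj_inv : x * w'⁻¹ * x⁻¹ = μ⁻¹ • w'⁻¹ := by
    rw [← inv_inv x, ← mul_inv_rev, ← mul_inv_rev, inv_inv, ← mul_assoc, hw', smul_inv₀]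
  calc x * (w'⁻¹ * w) * x⁻¹ = (x * w'⁻¹ * x⁻¹) * (x * w * x⁻¹) := by
        simp only [mul_assoc, inv_mul_cancel_left₀ hx]
    _ = w'⁻¹ * w + algebraMap F D μ⁻¹ := by
        rw [hconj_inv, hw, smul_mul_assoc, mul_add, smul_add, mul_smul_comm, smul_smul,
          inv_mul_cancel₀ hμ, one_smul, inv_mul_cancel₀ hw'0, Algebra.algebraMap_eq_smul_one]

theorem genEigenspace_two_le_eigenspace (hD : IsPureQuantum D) {x : D} (hx : x ≠ 0)
    (f : End F D) (hf : ∀ y : D, f y = x * y * x⁻¹) (μ : F) :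
    f.genEigenspace μ 2 ≤ f.eigenspace μ := by
  intro v hv
  rw [← Nat.cast_two, Module.End.mem_genEigenspace_nat, LinearMap.mem_ker, sq,
    Module.End.mul_apply] at hv
  rw [Module.End.mem_eigenspace_iff, ← sub_eq_zero]
  refine hD.eq_zero_of_conj_eq_smul_add hx μ (w := v) ?_ ?_
  · rw [← hf]
    abel
  · simpa [hf, sub_eq_zero] using hv

end IsPureQuantum

/-- Proposition 3.3: let `D` be a pure quantum division ring over a central
subfield `F` (no `u, v ∈ D` with `u*v - v*u = 1`), `x ∈ D` nonzero, and
`Ad_x : D → D` the `F`-linear map `y ↦ x y x⁻¹`. If `W` is a finite-dimensional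
`Ad_x`-invariant `F`-subspace of `D` and the minimal polynomial of `Ad_x|_W`
splits into linear factors over `F`, then `Ad_x|_W` is diagonalizable: `W` is
the sum of the eigenspaces of `Ad_x|_W`. -/
theorem adjoint_action_diagonalizable_of_pure_quantum
    {F D : Type*} [Field F] [DivisionRing D] [Algebra F D]
    (hpq : ¬ ∃ u v : D, u * v - v * u = 1)
    (x : D) (hx : x ≠ 0)
    (f : D →ₗ[F] D) (hf : ∀ y : D, f y = x * y * x⁻¹)
    (W : Submodule F D) [FiniteDimensional F W]
    (hinv : ∀ w ∈ W, f w ∈ W)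
    (hsplit : Polynomial.Splits
      (minpoly F (LinearMap.restrict f hinv))) :
    ⨆ μ : F, Module.End.eigenspace (LinearMap.restrict f hinv) μ = ⊤ := by
  refine Module.End.iSup_eigenspace_eq_top_of_splits _ hsplit fun μ ↦ ?_
  rw [Module.End.eigenspace, Module.End.genEigenspace_restrict, Module.End.genEigenspace_restrict]
  exact Submodule.comap_mono (IsPureQuantum.genEigenspace_two_le_eigenspace hpq hx f hf μ)
end

section
/- Let F be a field and D a division ring that is an F-algebra with F contained in the center of D. Let α ∈ F with α ≠ 0, and let x, u, v ∈ D with x ≠ 0 and u ≠ 0. Suppose x u x^{−1} = α·u and x v x^{−1} = u + α·v. Then the element Y = α·u^{−1} v x^{−1} satisfies x*Y − Y*x = 1. -/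
/-- The key computation in the proof of Proposition 3.3: if `x u x⁻¹ = α u` and
`x v x⁻¹ = u + α v` in a division ring `D` over a central subfield `F` (with
`α ≠ 0`, `x ≠ 0`, `u ≠ 0`), then `Y = α u⁻¹ v x⁻¹` satisfies `x*Y - Y*x = 1`. -/
theorem jordan_block_gives_weyl_relation
    {F D : Type*} [Field F] [DivisionRing D] [Algebra F D]
    (α : F) (hα : α ≠ 0) (x u v : D) (hx : x ≠ 0) (hu : u ≠ 0)
    (h1 : x * u * x⁻¹ = α • u) (h2 : x * v * x⁻¹ = u + α • v) :
    x * (α • (u⁻¹ * v * x⁻¹)) - (α • (u⁻¹ * v * x⁻¹)) * x = 1 := by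
  have hx' : x⁻¹ * x = 1 := inv_mul_cancel₀ hx
  have hu' : u⁻¹ * u = 1 := inv_mul_cancel₀ hu
  have h1' : x * u = α • (u * x) := by
    have := congrArg (· * x) h1
    simpa [mul_assoc, hx', smul_mul_assoc] using this
  have h2' : x * v = (u + α • v) * x := by
    have := congrArg (· * x) h2
    simpa [mul_assoc, hx'] using this
  have hinv : x * u⁻¹ = α⁻¹ • (u⁻¹ * x) := by
    have h := congrArg (fun t => u⁻¹ * t * u⁻¹) h1'
    simp only [mul_smul_comm, smul_mul_assoc] at h
    simp only [mul_assoc] at h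
    rw [mul_inv_cancel₀ hu, mul_one, ← mul_assoc u⁻¹ u, hu', one_mul] at h
    rw [h, smul_smul, inv_mul_cancel₀ hα, one_smul]
  have key : x * (u⁻¹ * v * x⁻¹) = α⁻¹ • (1 + α • (u⁻¹ * v)) := by
    calc x * (u⁻¹ * v * x⁻¹) = (x * u⁻¹) * v * x⁻¹ := by
          simp only [mul_assoc]
      _ = α⁻¹ • (u⁻¹ * (x * v) * x⁻¹) := by
          rw [hinv]; simp [smul_mul_assoc, mul_assoc]
      _ = α⁻¹ • (u⁻¹ * (u + α • v)) := by
          rw [h2', mul_assoc _ _ x⁻¹, mul_assoc _ x x⁻¹, mul_inv_cancel₀ hx, mul_one]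
      _ = α⁻¹ • (1 + α • (u⁻¹ * v)) := by rw [mul_add, hu', mul_smul_comm]
  have hYx : (α • (u⁻¹ * v * x⁻¹)) * x = α • (u⁻¹ * v) := by
    rw [smul_mul_assoc, mul_assoc, hx', mul_one]
  rw [mul_smul_comm, key, hYx, smul_smul, mul_inv_cancel₀ hα, one_smul,
    add_sub_cancel_right]
end

section
/- Let k be a field of characteristic zero and let R be a k-algebra which is a domain such that the set of nonzero elements of R is a left and right Ore set; let D = Fract(R) be the Ore localization of R at its nonzero elements (a division ring). Let C be a commutative k-subalgebra of the center of R such that R is free as a C-module. Suppose there exists a family Ω of prime ideals of C with ⋂_{E ∈ Ω} E = 0 such that for every E ∈ Ω, writing I_E = RE for the two-sided ideal of R generated by E and R_E = R/I_E, the ring R_E is a domain whose set of nonzero elements is a left and right Ore set, and R_E is finitely generated as a module over its center Z_E. Then R is pure quantum: there exist no elements x, y ∈ D with x*y − y*x = 1. -/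
/-!
Write `x = c⁻¹ A`, `y = c⁻¹ B` with a common left denominator and clear the remaining inverses
with the left Ore condition: `x y - y x = 1` becomes finitely many identities in `R` whose
denominators are right factors of one nonzero element `d`. The coordinates (in a `C`-basis of
`R`) of elements of `R E` lie in `E`, and `⋂ Ω = 0`, so `d ∉ R E` for some `E ∈ Ω`. Since
`Frac Z_E` is flat over `Z_E`, every nonzero element of `R_E` acts invertibly by left
multiplication on the finite-dimensional `Frac Z_E`-space `Frac Z_E ⊗ R_E`, so the identities
produce endomorphisms `X, Y` with `X Y - Y X = 1`; taking traces gives `0 = dim ≠ 0` in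
characteristic zero.
-/

open scoped TensorProduct

theorem mul_commutator_eq_of_left_ore {T : Type*} [Ring T] {X Y A B c c₁ c₂ A₁ B₂ q p : T}
    (hX : c * X = A) (hY : c * Y = B) (hA : c₁ * A = A₁ * c) (hB : c₂ * B = B₂ * c)
    (hqp : q * (c₁ * c) = p * (c₂ * c)) :
    q * (c₁ * c) * (X * Y - Y * X) = q * (A₁ * B) - p * (B₂ * A) := by
  have hXY : q * (c₁ * c) * (X * Y) = q * (A₁ * B) := by
    rw [← hY, ← mul_assoc A₁, ← hA, ← hX]; simp only [mul_assoc]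
  have hYX : p * (c₂ * c) * (Y * X) = p * (B₂ * A) := by
    rw [← hX, ← mul_assoc B₂, ← hB, ← hY]; simp only [mul_assoc]
  rw [mul_sub, hXY, hqp, hYX]

theorem exists_common_left_denom {R D : Type*} [Ring R] [IsDomain R] [DivisionRing D]
    (hOreL : ∀ r s : R, s ≠ 0 → ∃ r' s' : R, s' ≠ 0 ∧ s' * r = r' * s)
    {φ : R →+* D} (hφ : Function.Injective φ)
    (hfracL : ∀ x : D, ∃ r s : R, s ≠ 0 ∧ x = (φ s)⁻¹ * φ r) (x y : D) :
    ∃ c A B : R, c ≠ 0 ∧ φ c * x = φ A ∧ φ c * y = φ B := by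
  obtain ⟨a, s, hs, rfl⟩ := hfracL x
  obtain ⟨b, t, ht, rfl⟩ := hfracL y
  obtain ⟨v, u, hu, hust⟩ := hOreL s t ht
  have hφs : φ s ≠ 0 := (map_ne_zero_iff φ hφ).mpr hs
  have hφt : φ t ≠ 0 := (map_ne_zero_iff φ hφ).mpr ht
  refine ⟨u * s, u * a, v * b, mul_ne_zero hu hs, ?_, ?_⟩
  · rw [map_mul, mul_assoc, mul_inv_cancel_left₀ hφs, map_mul]
  · rw [hust, map_mul, mul_assoc, mul_inv_cancel_left₀ hφt, map_mul]

/-- Data turning `x = c⁻¹ A`, `y = c⁻¹ B` into a solution of `x y - y x = 1` in any ring where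
`c` and `den = q c₁ c` are invertible: `A c⁻¹ = c₁⁻¹ A₁`, `B c⁻¹ = c₂⁻¹ B₂`, and `den = p c₂ c` is
a common left multiple of the two resulting denominators. -/
structure CommutatorRelation (R : Type*) [Ring R] where
  c : R
  A : R
  B : R
  c₁ : R
  A₁ : R
  c₂ : R
  B₂ : R
  q : R
  p : R
  left_ore_A : c₁ * A = A₁ * c
  left_ore_B : c₂ * B = B₂ * c
  common_multiple : q * (c₁ * c) = p * (c₂ * c)
  commutator : q * (A₁ * B) - p * (B₂ * A) = q * (c₁ * c)

namespace CommutatorRelation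

variable {R : Type*} [Ring R] (w : CommutatorRelation R)

def den : R := w.q * (w.c₁ * w.c)

theorem map_den_mul_commutator {T : Type*} [Ring T] (f : R →+* T) {X Y : T}
    (hX : f w.c * X = f w.A) (hY : f w.c * Y = f w.B) :
    f w.den * (X * Y - Y * X) = f w.den := by
  have hA : f w.c₁ * f w.A = f w.A₁ * f w.c := by rw [← map_mul, ← map_mul, w.left_ore_A]
  have hB : f w.c₂ * f w.B = f w.B₂ * f w.c := by rw [← map_mul, ← map_mul, w.left_ore_B]
  have hqp : f w.q * (f w.c₁ * f w.c) = f w.p * (f w.c₂ * f w.c) := by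
    simp only [← map_mul, w.common_multiple]
  rw [den, map_mul, map_mul, mul_commutator_eq_of_left_ore hX hY hA hB hqp]
  simp only [← map_mul, ← map_sub, w.commutator]

theorem exists_den_ne_zero {R D : Type*} [Ring R] [IsDomain R] [DivisionRing D]
    (hOreL : ∀ r s : R, s ≠ 0 → ∃ r' s' : R, s' ≠ 0 ∧ s' * r = r' * s)
    {φ : R →+* D} (hφ : Function.Injective φ)
    (hfracL : ∀ x : D, ∃ r s : R, s ≠ 0 ∧ x = (φ s)⁻¹ * φ r) {x y : D}
    (hxy : x * y - y * x = 1) :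
    ∃ w : CommutatorRelation R, w.den ≠ 0 := by
  obtain ⟨c, A, B, hc, hA, hB⟩ := exists_common_left_denom hOreL hφ hfracL x y
  obtain ⟨A₁, c₁, hc₁, hA₁⟩ := hOreL A c hc
  obtain ⟨B₂, c₂, hc₂, hB₂⟩ := hOreL B c hc
  obtain ⟨p, q, hq, hqp⟩ := hOreL (c₁ * c) (c₂ * c) (mul_ne_zero hc₂ hc)
  have hrel := mul_commutator_eq_of_left_ore hA hB
    (by rw [← map_mul, ← map_mul, hA₁]) (by rw [← map_mul, ← map_mul, hB₂])
    (by simp only [← map_mul, hqp] : φ q * (φ c₁ * φ c) = φ p * (φ c₂ * φ c))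
  simp only [hxy, mul_one, ← map_mul, ← map_sub] at hrel
  exact ⟨⟨c, A, B, c₁, A₁, c₂, B₂, q, p, hA₁, hB₂, hqp, (hφ hrel).symm⟩,
    mul_ne_zero hq (mul_ne_zero hc₁ hc)⟩

end CommutatorRelation

theorem Module.End.mul_sub_mul_ne_one {K V : Type*} [Field K] [CharZero K] [AddCommGroup V]
    [Module K V] [FiniteDimensional K V] [Nontrivial V] (X Y : Module.End K V) :
    X * Y - Y * X ≠ 1 := by
  intro h
  have htr := congrArg (LinearMap.trace K V) h
  rw [map_sub, LinearMap.trace_mul_comm, sub_self, LinearMap.trace_one] at htr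
  exact Nat.cast_ne_zero.mpr Module.finrank_pos.ne' htr.symm

section CenterBaseChange

variable (B : Type*) [Ring B]

local notation "Z" => Subring.center B
local notation "K" => FractionRing (Subring.center B)

noncomputable def baseChangeCenterMulLeft : B →+* Module.End K (K ⊗[Z] B) :=
  ((Module.End.baseChangeHom Z K B).comp (Algebra.lmul Z B)).toRingHom

variable {B}

theorem isUnit_baseChangeCenterMulLeft [IsDomain B] [Module.Finite Z B] {b : B} (hb : b ≠ 0) :
    IsUnit (baseChangeCenterMulLeft B b) := by
  rw [LinearMap.isUnit_iff_ker_eq_bot, LinearMap.ker_eq_bot]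
  exact Module.Flat.lTensor_preserves_injective_linearMap (M := K) (LinearMap.mulLeft Z b)
    (mul_right_injective₀ hb)

instance [Nontrivial B] : Nontrivial (K ⊗[Z] B) :=
  Algebra.TensorProduct.nontrivial_of_algebraMap_injective_of_flat_left Z K B Subtype.val_injective

theorem CommutatorRelation.map_den_eq_zero {R : Type*} [Ring R] (w : CommutatorRelation R)
    [IsDomain B] [CharZero B] [Module.Finite Z B] (f : R →+* B) : f w.den = 0 := by
  by_contra hw
  have hc : f w.c ≠ 0 := by
    rw [CommutatorRelation.den, map_mul, map_mul] at hw
    exact right_ne_zero_of_mul (right_ne_zero_of_mul hw)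
  obtain ⟨u, hu⟩ := isUnit_baseChangeCenterMulLeft hc
  let X := (u⁻¹ : (Module.End K (K ⊗[Z] B))ˣ) * baseChangeCenterMulLeft B (f w.A)
  let Y := (u⁻¹ : (Module.End K (K ⊗[Z] B))ˣ) * baseChangeCenterMulLeft B (f w.B)
  refine Module.End.mul_sub_mul_ne_one X Y
    ((isUnit_baseChangeCenterMulLeft hw).mul_left_cancel ?_)
  rw [mul_one]
  refine w.map_den_mul_commutator (T := Module.End K (K ⊗[Z] B))
    ((baseChangeCenterMulLeft B).comp f) ?_ ?_ <;>
    simp only [RingHom.comp_apply, X, Y, ← hu, Units.mul_inv_cancel_left]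

end CenterBaseChange

section CentralIdeal

variable {C R : Type*} [CommRing C] [Ring R] [Algebra C R]

instance Ideal.isTwoSided_map_algebraMap (E : Ideal C) :
    (E.map (algebraMap C R)).IsTwoSided where
  mul_mem_of_left b hx := by
    induction hx using Submodule.span_induction with
    | mem y hy =>
      obtain ⟨e, he, rfl⟩ := hy
      rw [Algebra.commutes]
      exact Ideal.mul_mem_left _ b (Ideal.mem_map_of_mem _ he)
    | zero => simp
    | add u v _ _ hu hv => rw [add_mul]; exact Ideal.add_mem _ hu hv
    | smul r u _ hu => rw [smul_eq_mul, mul_assoc]; exact Ideal.mul_mem_left _ r hu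

theorem Ideal.mem_smul_top_of_mem_map_algebraMap {E : Ideal C} {x : R}
    (hx : x ∈ E.map (algebraMap C R)) : x ∈ E • (⊤ : Submodule C R) := by
  induction hx using Submodule.span_induction with
  | mem y hy =>
    obtain ⟨e, he, rfl⟩ := hy
    rw [Algebra.algebraMap_eq_smul_one]
    exact Submodule.smul_mem_smul he Submodule.mem_top
  | zero => exact zero_mem _
  | add u v _ _ hu hv => exact add_mem hu hv
  | smul r u _ hu => exact Submodule.smul_top_le_comap_smul_top E (LinearMap.mulLeft C r) hu

theorem Module.Basis.repr_mem_of_mem_map_algebraMap {ι : Type*} (b : Module.Basis ι C R)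
    {E : Ideal C} {x : R} (hx : x ∈ E.map (algebraMap C R)) (i : ι) : b.repr x i ∈ E := by
  have h := Submodule.smul_top_le_comap_smul_top E (b.coord i)
    (Ideal.mem_smul_top_of_mem_map_algebraMap hx)
  simpa using h

theorem exists_notMem_map_algebraMap_of_sInf_eq_bot [Module.Free C R] {Ω : Set (Ideal C)}
    (hΩ : sInf Ω = ⊥) {r : R} (hr : r ≠ 0) : ∃ E ∈ Ω, r ∉ E.map (algebraMap C R) := by
  let b := Module.Free.chooseBasis C R
  obtain ⟨i, hi⟩ : ∃ i, b.repr r i ≠ 0 := by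
    by_contra! h
    exact hr (b.repr.map_eq_zero_iff.mp (Finsupp.ext h))
  by_contra! h
  have hmem : b.repr r i ∈ sInf Ω := Submodule.mem_sInf.mpr fun E hE =>
    b.repr_mem_of_mem_map_algebraMap (h E hE) i
  rw [hΩ, Submodule.mem_bot] at hmem
  exact hi hmem

end CentralIdeal

theorem Ideal.Quotient.moduleFinite_center {R : Type*} [Ring R] (I : Ideal R) [I.IsTwoSided]
    {m : ℕ} (v : Fin m → R)
    (hv : ∀ r : R, ∃ z : Fin m → R, (∀ j, ∀ w : R, z j * w - w * z j ∈ I) ∧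
      r - ∑ j, z j * v j ∈ I) :
    Module.Finite (Subring.center (R ⧸ I)) (R ⧸ I) := by
  refine Module.Finite.of_surjective
    (Fintype.linearCombination (Subring.center (R ⧸ I)) fun j => Ideal.Quotient.mk I (v j)) ?_
  intro y
  obtain ⟨r, rfl⟩ := Ideal.Quotient.mk_surjective y
  obtain ⟨z, hz, hr⟩ := hv r
  have hcentral (j : Fin m) : Ideal.Quotient.mk I (z j) ∈ Subring.center (R ⧸ I) := by
    refine Subring.mem_center_iff.mpr fun g => ?_
    obtain ⟨w, rfl⟩ := Ideal.Quotient.mk_surjective g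
    rw [← map_mul, ← map_mul]
    exact (Ideal.Quotient.eq.mpr (hz j w)).symm
  refine ⟨fun j => ⟨_, hcentral j⟩, ?_⟩
  rw [Fintype.linearCombination_apply, Ideal.Quotient.eq.mpr hr, map_sum]
  simp only [map_mul]
  rfl

theorem pure_quantum_of_pure_Q_algebra_general
    {k C R D : Type*} [Field k] [CharZero k]
    [CommRing C] [Ring R] [IsDomain R] [DivisionRing D]
    [Algebra k R] [Algebra C R]
    [Module.Free C R]
    (hOreL : ∀ r s : R, s ≠ 0 → ∃ r' s' : R, s' ≠ 0 ∧ s' * r = r' * s)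
    (φ : R →+* D) (hφ : Function.Injective φ)
    (hfracL : ∀ x : D, ∃ r s : R, s ≠ 0 ∧ x = (φ s)⁻¹ * φ r)
    (Ω : Set (Ideal C))
    (hzero : sInf Ω = ⊥)
    (hdomain : ∀ E ∈ Ω,
      (1 : R) ∉ Ideal.map (algebraMap C R) E ∧
      ∀ a b : R, a * b ∈ Ideal.map (algebraMap C R) E →
        a ∈ Ideal.map (algebraMap C R) E ∨ b ∈ Ideal.map (algebraMap C R) E)
    (hfg : ∀ E ∈ Ω, ∃ (m : ℕ) (v : Fin m → R), ∀ r : R, ∃ z : Fin m → R,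
      (∀ j : Fin m, ∀ w : R, z j * w - w * z j ∈ Ideal.map (algebraMap C R) E) ∧
      r - ∑ j : Fin m, z j * v j ∈ Ideal.map (algebraMap C R) E) :
    ¬ ∃ x y : D, x * y - y * x = 1 := by
  rintro ⟨x, y, hxy⟩
  obtain ⟨w, hw⟩ := CommutatorRelation.exists_den_ne_zero hOreL hφ hfracL hxy
  obtain ⟨E, hE, hwE⟩ := exists_notMem_map_algebraMap_of_sInf_eq_bot hzero hw
  let I := E.map (algebraMap C R)
  have : I.IsPrime := ⟨(Ideal.ne_top_iff_one I).mpr (hdomain E hE).1,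
    fun {a b} => (hdomain E hE).2 a b⟩
  have : CharZero (R ⧸ I) := charZero_of_injective_algebraMap (algebraMap k (R ⧸ I)).injective
  obtain ⟨m, v, hv⟩ := hfg E hE
  have := Ideal.Quotient.moduleFinite_center I v hv
  exact hwE (Ideal.Quotient.eq_zero_iff_mem.mp (w.map_den_eq_zero (Ideal.Quotient.mk I)))

/-- Theorem 2.3: let `k` be a field of characteristic zero, `R` a `k`-algebra
which is a domain whose nonzero elements form a left and right Ore set, and
`D = Fract R` its division ring of fractions (given by an embedding
`φ : R →+* D` such that every element of `D` is a left and a right fraction).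
Let `C` be a commutative `k`-subalgebra of the center of `R` (modelled by an
injective algebra map `C → R`, centrality being part of the `Algebra C R`
structure) with `R` free as a `C`-module. Suppose `Ω` is a family of prime
ideals of `C` with zero intersection such that, for every `E ∈ Ω`, with
`I_E = R·E` the ideal of `R` generated by `E`:
* `R_E = R/I_E` is a domain (here: `1 ∉ I_E` and `a*b ∈ I_E → a ∈ I_E ∨ b ∈ I_E`),
* the nonzero elements of `R_E` form a left and right Ore set (stated mod `I_E`),
* `R_E` is finitely generated as a module over its center `Z_E` (stated via
  lifts: finitely many `v j ∈ R` such that every `r ∈ R` is, mod `I_E`, a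
  combination `∑ z j * v j` with each `z j` central mod `I_E`).
Then `R` is pure quantum: there are no `x, y ∈ D` with `x*y - y*x = 1`. -/
theorem pure_quantum_of_pure_Q_algebra
    {k C R D : Type*} [Field k] [CharZero k]
    [CommRing C] [Ring R] [IsDomain R] [DivisionRing D]
    [Algebra k C] [Algebra k R] [Algebra C R] [IsScalarTower k C R]
    (hCinj : Function.Injective (algebraMap C R))
    [Module.Free C R]
    (hOreR : ∀ r s : R, s ≠ 0 → ∃ r' s' : R, s' ≠ 0 ∧ r * s' = s * r')
    (hOreL : ∀ r s : R, s ≠ 0 → ∃ r' s' : R, s' ≠ 0 ∧ s' * r = r' * s)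
    (φ : R →+* D) (hφ : Function.Injective φ)
    (hfracR : ∀ x : D, ∃ r s : R, s ≠ 0 ∧ x = φ r * (φ s)⁻¹)
    (hfracL : ∀ x : D, ∃ r s : R, s ≠ 0 ∧ x = (φ s)⁻¹ * φ r)
    (Ω : Set (Ideal C)) (hprime : ∀ E ∈ Ω, E.IsPrime)
    (hzero : sInf Ω = ⊥)
    (hdomain : ∀ E ∈ Ω,
      (1 : R) ∉ Ideal.map (algebraMap C R) E ∧
      ∀ a b : R, a * b ∈ Ideal.map (algebraMap C R) E →
        a ∈ Ideal.map (algebraMap C R) E ∨ b ∈ Ideal.map (algebraMap C R) E)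
    (hOreRE : ∀ E ∈ Ω, ∀ a s : R, s ∉ Ideal.map (algebraMap C R) E →
      ∃ a' s' : R, s' ∉ Ideal.map (algebraMap C R) E ∧
        a * s' - s * a' ∈ Ideal.map (algebraMap C R) E)
    (hOreLE : ∀ E ∈ Ω, ∀ a s : R, s ∉ Ideal.map (algebraMap C R) E →
      ∃ a' s' : R, s' ∉ Ideal.map (algebraMap C R) E ∧
        s' * a - a' * s ∈ Ideal.map (algebraMap C R) E)
    (hfg : ∀ E ∈ Ω, ∃ (m : ℕ) (v : Fin m → R), ∀ r : R, ∃ z : Fin m → R,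
      (∀ j : Fin m, ∀ w : R, z j * w - w * z j ∈ Ideal.map (algebraMap C R) E) ∧
      r - ∑ j : Fin m, z j * v j ∈ Ideal.map (algebraMap C R) E) :
    ¬ ∃ x y : D, x * y - y * x = 1 :=
  pure_quantum_of_pure_Q_algebra_general (k := k) hOreL φ hφ hfracL Ω hzero hdomain hfg
end
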